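/- arXiv:2105.11250 — 6 statements merged into one kernel-verified Lean document; each statement's English description precedes it below -/
import Mathlib

section
/- Let S and S' be finite subsets of {1,...,n} with |S'| = |S|. Then S' is a static one shift of S (i.e., the sorted position sequences agree except at one index j where p'_j = p_j + 1) if and only if S' ≠ S, the sum of the elements of S' exceeds the sum of the elements of S by exactly 1, and |S \ S'| = 1. -/
/-!
Both sides say that `S'` is obtained from `S` by exchanging some `a ∈ S` for `a + 1 ∉ S`.
Overwriting the `j`-th entry `a` of a list by `x` changes its multiset by exchanging `a` for
`x`; and when `a + 1 ∉ S`, putting `a + 1` in place of `a` keeps the sorted list of `S` strictly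
increasing, so the result is the sorted list of the exchanged set. On the arithmetic side, equal
cardinalities and `|S \ S'| = 1` say that `S'` exchanges one `a ∈ S` for one `b ∉ S`, and the
sums then force `b = a + 1`.
-/

def sortedList (S : Finset ℕ) : List ℕ := S.sort (· ≤ ·)

def IsStaticOneShift (S S' : Finset ℕ) : Prop :=
  ∃ j : ℕ, j < (sortedList S).length ∧
    sortedList S' = (sortedList S).set j ((sortedList S).getD j 0 + 1)

theorem List.perm_getElem_cons_set {α : Type*} (L : List α) {j : ℕ} (hj : j < L.length)
    (x : α) : (L[j] :: L.set j x).Perm (x :: L) := by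
  simpa [List.getElem?_eq_getElem hj] using L.getD_set_perm_cons j x

theorem List.SortedLT.set {α : Type*} [Preorder α] {L : List α} (hL : L.SortedLT) {j : ℕ}
    (hj : j < L.length) {x : α} (hjx : L[j] ≤ x)
    (hxk : ∀ k (hk : k < L.length), j < k → x < L[k]) : (L.set j x).SortedLT := by
  refine List.sortedLT_of_getElem_lt_getElem_of_lt fun i k hi hk hik => ?_
  simp only [List.length_set] at hi hk
  simp only [List.getElem_set]
  split_ifs with hji hjk hjk
  · omega
  · subst hji; exact hxk k hk hik
  · subst hjk; exact (hL.getElem_lt_getElem_of_lt hik).trans_le hjx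
  · exact hL.getElem_lt_getElem_of_lt hik

namespace Finset

variable {α : Type*} [DecidableEq α]

theorem cons_val_eq_cons_val_iff {S T : Finset α} {a b : α} (hab : a ≠ b) :
    a ::ₘ T.val = b ::ₘ S.val ↔ a ∈ S ∧ b ∉ S ∧ T = insert b (S.erase a) := by
  constructor
  · intro h
    have haS : a ∈ S := by
      have := h ▸ Multiset.mem_cons_self a T.val
      simpa [hab] using this
    have hT : T.val = b ::ₘ S.val.erase a := by
      rw [← Multiset.erase_cons_head a T.val, h, Multiset.erase_cons_tail _ hab.symm]
    have hbS : b ∉ S := by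
      have hnodup := T.nodup
      rw [hT, Multiset.nodup_cons, Multiset.mem_erase_of_ne hab.symm] at hnodup
      exact hnodup.1
    refine ⟨haS, hbS, val_injective ?_⟩
    rw [insert_val_of_notMem (fun h => hbS (mem_of_mem_erase h)), erase_val, hT]
  · rintro ⟨haS, hbS, rfl⟩
    rw [insert_val_of_notMem (fun h => hbS (mem_of_mem_erase h)), erase_val,
      Multiset.cons_swap, Multiset.cons_erase haS]

theorem sdiff_insert_erase {S : Finset α} {a b : α} (ha : a ∈ S) (hb : b ∉ S) :
    S \ insert b (S.erase a) = {a} := by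
  ext x
  simp only [mem_sdiff, mem_insert, mem_erase, mem_singleton]
  constructor
  · rintro ⟨hx, hxb⟩
    by_contra hxa
    exact hxb (Or.inr ⟨hxa, hx⟩)
  · rintro rfl
    exact ⟨ha, by rintro (rfl | ⟨h, -⟩) <;> trivial⟩

theorem exists_eq_insert_erase_iff {S T : Finset α} :
    (∃ a ∈ S, ∃ b ∉ S, T = insert b (S.erase a)) ↔ #T = #S ∧ #(S \ T) = 1 := by
  constructor
  · rintro ⟨a, ha, b, hb, rfl⟩
    refine ⟨?_, by rw [sdiff_insert_erase ha hb, card_singleton]⟩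
    rw [card_insert_of_notMem (fun h => hb (mem_of_mem_erase h)), card_erase_add_one ha]
  · rintro ⟨hcard, hST⟩
    obtain ⟨a, ha⟩ := card_eq_one.mp hST
    obtain ⟨b, hb⟩ := card_eq_one.mp ((card_sdiff_comm hcard.symm).symm.trans hST)
    have haST := mem_sdiff.mp (ha ▸ mem_singleton_self a)
    have hbTS := mem_sdiff.mp (hb ▸ mem_singleton_self b)
    refine ⟨a, haST.1, b, hbTS.2, ?_⟩
    ext x
    have hxa := congrArg (x ∈ ·) ha
    have hxb := congrArg (x ∈ ·) hb
    simp only [mem_sdiff, mem_singleton, eq_iff_iff] at hxa hxb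
    simp only [mem_insert, mem_erase]
    tauto

theorem sum_insert_erase_add {M : Type*} [AddCommMonoid M] (f : α → M) {S : Finset α} {a b : α}
    (ha : a ∈ S) (hb : b ∉ S) :
    ∑ x ∈ insert b (S.erase a), f x + f a = ∑ x ∈ S, f x + f b := by
  rw [sum_insert (fun h => hb (mem_of_mem_erase h)), add_assoc, sum_erase_add _ _ ha, add_comm]

end Finset

theorem isStaticOneShift_iff {S S' : Finset ℕ} :
    IsStaticOneShift S S' ↔ ∃ a ∈ S, a + 1 ∉ S ∧ S' = insert (a + 1) (S.erase a) := by
  have hval (T : Finset ℕ) : ((sortedList T : List ℕ) : Multiset ℕ) = T.val := T.sort_eq _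
  constructor
  · rintro ⟨j, hj, h⟩
    rw [List.getD_eq_getElem _ _ hj] at h
    have hperm : (sortedList S)[j] ::ₘ S'.val = ((sortedList S)[j] + 1) ::ₘ S.val := by
      rw [← hval, ← hval, h]
      exact Multiset.coe_eq_coe.mpr ((sortedList S).perm_getElem_cons_set hj _)
    obtain ⟨ha, hb, rfl⟩ := (Finset.cons_val_eq_cons_val_iff (by omega)).mp hperm
    exact ⟨_, ha, hb, rfl⟩
  · rintro ⟨a, ha, hb, rfl⟩
    set L := sortedList S
    have hmem {x : ℕ} : x ∈ L ↔ x ∈ S := S.mem_sort _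
    have hj : L.idxOf a < L.length := List.idxOf_lt_length_iff.mpr (hmem.mpr ha)
    have hLj : L[L.idxOf a] = a := List.getElem_idxOf hj
    refine ⟨L.idxOf a, hj, ?_⟩
    rw [List.getD_eq_getElem _ _ hj, hLj]
    have hsorted : L.SortedLT := S.sortedLT_sort
    have hshift : (L.set (L.idxOf a) (a + 1)).SortedLT := by
      refine hsorted.set hj (by omega) fun k hk hjk => ?_
      have hak : a < L[k] := hLj ▸ hsorted.getElem_lt_getElem_of_lt hjk
      have hne : L[k] ≠ a + 1 := fun h => hb (hmem.mp (h ▸ List.getElem_mem hk))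
      omega
    have hperm : (sortedList (insert (a + 1) (S.erase a))).Perm (L.set (L.idxOf a) (a + 1)) := by
      rw [← Multiset.coe_eq_coe, hval, ← Multiset.cons_inj_right a,
        (Finset.cons_val_eq_cons_val_iff (by omega)).mpr ⟨ha, hb, rfl⟩, ← hval S]
      have hcons := L.perm_getElem_cons_set hj (a + 1)
      rw [hLj] at hcons
      exact (Multiset.coe_eq_coe.mpr hcons).symm
    exact hperm.eq_of_sortedLE (Finset.sortedLT_sort _).sortedLE hshift.sortedLE

theorem stmt_0_general (S S' : Finset ℕ) (hcard : S'.card = S.card) :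
    IsStaticOneShift S S' ↔
      S' ≠ S ∧ (∑ i ∈ S', i) = (∑ i ∈ S, i) + 1 ∧ (S \ S').card = 1 := by
  rw [isStaticOneShift_iff]
  constructor
  · rintro ⟨a, ha, hb, rfl⟩
    have hsum := Finset.sum_insert_erase_add (fun i => i) ha hb
    refine ⟨fun h => hb (h ▸ Finset.mem_insert_self _ _), by omega,
      (Finset.exists_eq_insert_erase_iff.mp ⟨a, ha, a + 1, hb, rfl⟩).2⟩
  · rintro ⟨-, hsum, hsdiff⟩
    obtain ⟨a, ha, b, hb, rfl⟩ := Finset.exists_eq_insert_erase_iff.mpr ⟨hcard, hsdiff⟩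
    have hsum' := Finset.sum_insert_erase_add (fun i => i) ha hb
    obtain rfl : b = a + 1 := by omega
    exact ⟨a, ha, hb, rfl⟩

theorem stmt_0 (n : ℕ) (S S' : Finset ℕ) (hS : S ⊆ Finset.Icc 1 n)
    (hS' : S' ⊆ Finset.Icc 1 n) (hcard : S'.card = S.card) :
    IsStaticOneShift S S' ↔
      S' ≠ S ∧ (∑ i ∈ S', i) = (∑ i ∈ S, i) + 1 ∧ (S \ S').card = 1 :=
  stmt_0_general S S' hcard
end

section
/- For every m with 1 ≤ m ≤ n and every subset S ⊆ {1,...,n} with |S| = m, there is a finite sequence of subsets {1,...,m} = S_0, S_1, ..., S_t = S such that each S_{i+1} is a static one shift of S_i. -/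
open Finset Equiv Relation

theorem List.map_swap_getElem_eq_set {α : Type*} [DecidableEq α] {l : List α} (hl : l.Nodup)
    {j : ℕ} (hj : j < l.length) {b : α} (hb : b ∉ l) :
    l.map (Equiv.swap l[j] b) = l.set j b := by
  refine List.ext_getElem (by simp) fun i hi _ => ?_
  rw [List.getElem_map, List.getElem_set]
  split_ifs with hji
  · subst hji; exact swap_apply_left _ _
  · exact swap_apply_of_ne_of_ne (mt (hl.getElem_inj_iff.1 ·) (Ne.symm hji))
      fun h => hb (h ▸ List.getElem_mem _)

lemma strictMonoOn_swap_succ {S : Finset ℕ} {a : ℕ} (hb : a + 1 ∉ S) :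
    StrictMonoOn (swap a (a + 1)) S := by
  intro x hx y hy hxy
  have hx1 : x ≠ a + 1 := fun h => hb (h ▸ hx)
  have hy1 : y ≠ a + 1 := fun h => hb (h ▸ hy)
  simp only [swap_apply_def]
  split_ifs <;> omega

lemma map_swap_succ {S : Finset ℕ} {a : ℕ} (ha : a ∈ S) (hb : a + 1 ∉ S) :
    S.map (swap a (a + 1)).toEmbedding = insert (a + 1) (S.erase a) := by
  ext x
  rw [mem_map_equiv, symm_swap, mem_insert, mem_erase, swap_apply_def]
  split_ifs <;> grind

lemma isStaticOneShift_insert_succ_erase {S : Finset ℕ} {a : ℕ} (ha : a ∈ S) (hb : a + 1 ∉ S) :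
    IsStaticOneShift S (insert (a + 1) (S.erase a)) := by
  unfold IsStaticOneShift sortedList
  obtain ⟨j, hj, rfl⟩ := List.getElem_of_mem ((mem_sort (· ≤ ·)).2 ha)
  refine ⟨j, hj, ?_⟩
  rw [List.getD_eq_getElem _ _ hj, ← map_swap_succ ha hb,
    ← (strictMonoOn_swap_succ hb).map_finsetSort]
  exact List.map_swap_getElem_eq_set (sort_nodup _ _) hj (mt (mem_sort _).1 hb)

lemma eq_Icc_card_of_pred_mem {S : Finset ℕ} (h0 : 0 ∉ S)
    (hpred : ∀ a, 0 < a → a + 1 ∈ S → a ∈ S) : S = Icc 1 #S := by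
  obtain rfl | hne := S.eq_empty_or_nonempty
  · rfl
  have hdown : ∀ x ∈ S, Icc 1 x ⊆ S := by
    intro x hx y hy
    rw [mem_Icc] at hy
    exact Nat.decreasingInduction (motive := fun k _ => 0 < k → k ∈ S)
      (fun k _ ih hk => hpred k hk (ih k.succ_pos)) (fun _ => hx) hy.2 hy.1
  have hS : S = Icc 1 (S.max' hne) := by
    refine subset_antisymm ?_ (hdown _ (S.max'_mem hne))
    intro x hx
    exact mem_Icc.2 ⟨Nat.pos_of_ne_zero (ne_of_mem_of_not_mem hx h0), S.le_max' x hx⟩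
  conv_rhs => rw [hS, Nat.card_Icc, Nat.add_sub_cancel]
  exact hS

theorem reflTransGen_isStaticOneShift_Icc_card (S : Finset ℕ) (h0 : 0 ∉ S) :
    ReflTransGen IsStaticOneShift (Icc 1 #S) S := by
  induction hk : ∑ x ∈ S, x using Nat.strong_induction_on generalizing S with
  | _ k ih =>
  by_cases hgap : ∃ a, 0 < a ∧ a ∉ S ∧ a + 1 ∈ S
  · obtain ⟨a, ha0, haS, hbS⟩ := hgap
    set T := insert a (S.erase (a + 1))
    have haT : a ∉ S.erase (a + 1) := fun h => haS (mem_of_mem_erase h)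
    have hbT : a + 1 ∉ T := by simp [T]
    have hshift : IsStaticOneShift T S := by
      have h := isStaticOneShift_insert_succ_erase (mem_insert_self a _) hbT
      rwa [erase_insert haT, insert_erase hbS] at h
    have hcard : #T = #S := by
      rw [card_insert_of_notMem haT, card_erase_add_one hbS]
    have h0T : 0 ∉ T := by simp [T, ha0.ne, h0]
    have hsum : ∑ x ∈ T, x + 1 = k := by
      rw [sum_insert haT, ← hk, ← sum_erase_add _ _ hbS]
      ring
    have hT := ih _ (by omega) T h0T rfl
    rw [hcard] at hT
    exact hT.tail hshift
  · rw [← eq_Icc_card_of_pred_mem h0 fun a ha hb => by_contra fun h => hgap ⟨a, ha, h, hb⟩]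

theorem stmt_9_general (n m : ℕ) (S : Finset ℕ)
    (hS : S ⊆ Finset.Icc 1 n) (hcard : S.card = m) :
    Relation.ReflTransGen IsStaticOneShift (Finset.Icc 1 m) S := by
  subst hcard
  exact reflTransGen_isStaticOneShift_Icc_card S fun h0 => by simpa using hS h0

theorem stmt_9 (n m : ℕ) (h1 : 1 ≤ m) (h2 : m ≤ n) (S : Finset ℕ)
    (hS : S ⊆ Finset.Icc 1 n) (hcard : S.card = m) :
    Relation.ReflTransGen IsStaticOneShift (Finset.Icc 1 m) S :=
  stmt_9_general n m S hS hcard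
end

section
/- Define a parent function on nonempty subsets of {1,...,n} as follows: if S = {1,...,m} for some m ≥ 2, parent(S) = {2,...,m}; otherwise parent(S) is the mandatory static one shift parent of S. Then for every nonempty S ⊆ {1,...,n} with S ≠ {1}, iterating the parent function reaches {1} in finitely many steps; i.e., every nonempty subset is reachable from {1} in the resulting rooted tree. -/
def MandStaticParent (n : ℕ) (T S : Finset ℕ) : Prop :=
  T ⊆ Finset.Icc 1 n ∧ IsStaticOneShift T S ∧
    ∀ U : Finset ℕ, U ⊆ Finset.Icc 1 n → IsStaticOneShift U S →
      T = U ∨ List.Lex (· < ·) (sortedList T) (sortedList U)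


def ParentRel (n : ℕ) (S T : Finset ℕ) : Prop :=
  (∃ m : ℕ, 2 ≤ m ∧ S = Finset.Icc 1 m ∧ T = Finset.Icc 2 m) ∨
    ((¬ ∃ m : ℕ, S = Finset.Icc 1 m) ∧ MandStaticParent n T S)

/-!
If `S ⊆ {1, …, n}` is not an initial segment `{1, …, m}`, some `x ∈ S` with `2 ≤ x` has
`x - 1 ∉ S`. Lowering such an `x` by one undoes a static one shift, and lowering the leftmost one
gives the lexicographically smallest sorted sequence, i.e. the mandatory static parent. Both kinds
of parent step stay inside `{1, …, n}`, keep the set nonempty and lower the sum of its elements, so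
iterating the parent map must stop, and the only nonempty set without a parent is `{1}`.
-/

open Finset

namespace List

variable {α : Type*}

lemma Pairwise.set_of_lt [Preorder α] {l : List α} (hl : l.Pairwise (· < ·)) {j : ℕ} {a : α}
    (hj : j < l.length) (hlt : a < l[j]) (hgt : ∀ (i : ℕ) (hi : i < j), l[i] < a) :
    (l.set j a).Pairwise (· < ·) := by
  rw [pairwise_iff_getElem] at hl ⊢
  intro i k hi hk hik
  simp only [length_set] at hi hk
  simp only [getElem_set]
  split_ifs with hji hjk hjk
  · omega
  · exact hlt.trans (hl j k hj hk (hji ▸ hik))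
  · exact hgt i (hjk ▸ hik)
  · exact hl i k hi hk hik

lemma lex_set_set_of_lt {r : α → α → Prop} :
    ∀ {l : List α} {j k : ℕ} {a b : α} (hj : j < l.length), j < k → r a l[j] →
      Lex r (l.set j a) (l.set k b)
  | _ :: _, 0, _ + 1, _, _, _, _, hr => Lex.rel hr
  | _ :: _, _ + 1, _ + 1, _, _, hj, hjk, hr =>
      Lex.cons (lex_set_set_of_lt (Nat.lt_of_succ_lt_succ hj) (by omega) hr)

lemma sum_set_add_getElem {M : Type*} [AddCommMonoid M] :
    ∀ {l : List M} {j : ℕ} (hj : j < l.length) (a : M), (l.set j a).sum + l[j] = l.sum + a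
  | _ :: _, 0, _, _ => by simp only [set_cons_zero, sum_cons, getElem_cons_zero]; abel
  | _ :: _, _ + 1, hj, _ => by
      simp only [set_cons_succ, sum_cons, getElem_cons_succ, add_assoc,
        sum_set_add_getElem (Nat.lt_of_succ_lt_succ hj)]

lemma Pairwise.set_sub_one {l : List ℕ} (hl : l.Pairwise (· < ·)) {j : ℕ}
    (hj : j < l.length) (hpos : 0 < l[j]) (hgap : l[j] - 1 ∉ l) :
    (l.set j (l[j] - 1)).Pairwise (· < ·) :=
  hl.set_of_lt hj (by omega) fun i hi => by
    have hlt := pairwise_iff_getElem.1 hl i j (by omega) hj hi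
    have hne : l[i] ≠ l[j] - 1 := fun h => hgap (h ▸ getElem_mem _)
    omega

end List

lemma sortedList_pairwise (S : Finset ℕ) : (sortedList S).Pairwise (· < ·) :=
  (sortedLT_sort S).pairwise

lemma mem_sortedList {a : ℕ} {S : Finset ℕ} : a ∈ sortedList S ↔ a ∈ S :=
  mem_sort _

lemma sortedList_toFinset {l : List ℕ} (hl : l.Pairwise (· < ·)) : sortedList l.toFinset = l :=
  (List.toFinset_sort _ hl.nodup).2 (hl.imp le_of_lt)

lemma sum_sortedList (S : Finset ℕ) : (sortedList S).sum = ∑ x ∈ S, x := by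
  conv_rhs => rw [← sort_toFinset S (· ≤ ·), ← sortedList]
  rw [List.sum_toFinset _ (sortedList_pairwise S).nodup, List.map_id']

lemma eq_Icc_of_sub_one_mem {S : Finset ℕ} (h0 : 0 ∉ S) (hS : ∀ x ∈ S, 2 ≤ x → x - 1 ∈ S) :
    ∃ m, S = Icc 1 m := by
  rcases S.eq_empty_or_nonempty with rfl | hne
  · exact ⟨0, rfl⟩
  refine ⟨S.max' hne, subset_antisymm (fun x hx => ?_) (fun y hy => ?_)⟩
  · exact mem_Icc.2 ⟨Nat.pos_of_ne_zero (ne_of_mem_of_not_mem hx h0), le_max' S x hx⟩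
  · obtain ⟨hy1, hym⟩ := mem_Icc.1 hy
    have hdown : ∀ k, k + y ≤ S.max' hne → S.max' hne - k ∈ S := by
      intro k
      induction k with
      | zero => exact fun _ => max'_mem S hne
      | succ k ih =>
        intro hk
        simpa [Nat.sub_sub] using hS _ (ih (by omega)) (by omega)
    simpa [Nat.sub_sub_self hym] using hdown (S.max' hne - y) (by omega)

def CanShiftDown (l : List ℕ) (j : ℕ) : Prop :=
  j < l.length ∧ 2 ≤ l.getD j 0 ∧ l.getD j 0 - 1 ∉ l

def shiftDown (S : Finset ℕ) (j : ℕ) : Finset ℕ :=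
  ((sortedList S).set j ((sortedList S).getD j 0 - 1)).toFinset

section shiftDown

variable {S T : Finset ℕ} {j : ℕ}

lemma sortedList_shiftDown (h : CanShiftDown (sortedList S) j) :
    sortedList (shiftDown S j) = (sortedList S).set j ((sortedList S).getD j 0 - 1) := by
  obtain ⟨hj, h2, hgap⟩ := h
  rw [shiftDown, List.getD_eq_getElem _ _ hj] at *
  exact sortedList_toFinset ((sortedList_pairwise S).set_sub_one hj (by omega) hgap)

lemma isStaticOneShift_shiftDown (h : CanShiftDown (sortedList S) j) :
    IsStaticOneShift (shiftDown S j) S := by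
  rw [IsStaticOneShift, sortedList_shiftDown h]
  obtain ⟨hj, h2, -⟩ := h
  refine ⟨j, by simpa using hj, ?_⟩
  rw [List.getD_eq_getElem _ _ hj] at h2
  simp only [List.set_set, List.getD_eq_getElem?_getD, List.getElem?_set_self hj, Option.getD_some,
    List.getElem?_eq_getElem hj, Nat.sub_add_cancel (by omega : 1 ≤ (sortedList S)[j]),
    List.set_getElem_self]

lemma IsStaticOneShift.canShiftDown_and_eq (h0 : 0 ∉ T) (h : IsStaticOneShift T S) :
    ∃ j, CanShiftDown (sortedList S) j ∧ T = shiftDown S j := by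
  obtain ⟨j, hj, hS⟩ := h
  have hjS : j < (sortedList S).length := by simpa [hS] using hj
  have hget : (sortedList S)[j] = (sortedList T)[j] + 1 := by
    simp only [List.getElem_of_eq hS, List.getElem_set_self, List.getD_eq_getElem _ _ hj]
  have hT : sortedList T = (sortedList S).set j ((sortedList S)[j] - 1) := by
    rw [hget, Nat.add_sub_cancel, hS, List.set_set, List.set_getElem_self]
  refine ⟨j, ⟨hjS, ?_, ?_⟩, ?_⟩ <;> simp only [shiftDown, List.getD_eq_getElem _ _ hjS]
  · have hpos : (sortedList T)[j] ≠ 0 := fun h => h0 (h ▸ mem_sortedList.1 (List.getElem_mem hj))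
    omega
  · rw [hget, Nat.add_sub_cancel]
    intro hmem
    obtain ⟨i, hi, hieq⟩ := List.getElem_of_mem hmem
    have hij : i ≠ j := by rintro rfl; omega
    have hTi : (sortedList T)[i]'(by simpa [hT] using hi) = (sortedList T)[j] := by
      rw [← hieq, List.getElem_of_eq hT, List.getElem_set_ne (Ne.symm hij)]
    exact hij (((sortedList_pairwise T).nodup.getElem_inj_iff).1 hTi)
  · rw [← hT]
    exact (sort_toFinset T _).symm

lemma shiftDown_subset_Icc {n : ℕ} (hS : S ⊆ Icc 1 n) (h : CanShiftDown (sortedList S) j) :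
    shiftDown S j ⊆ Icc 1 n := by
  intro x hx
  rw [shiftDown, List.mem_toFinset] at hx
  rcases List.mem_or_eq_of_mem_set hx with hx | rfl
  · exact hS (mem_sortedList.1 hx)
  · obtain ⟨hj, h2, -⟩ := h
    rw [List.getD_eq_getElem _ _ hj] at h2 ⊢
    have := mem_Icc.1 (hS (mem_sortedList.1 (List.getElem_mem hj)))
    exact mem_Icc.2 ⟨by omega, by omega⟩

lemma exists_canShiftDown (h0 : 0 ∉ S) (hS : ¬∃ m, S = Icc 1 m) :
    ∃ j, CanShiftDown (sortedList S) j := by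
  obtain ⟨x, hx, h2, hgap⟩ : ∃ x ∈ S, 2 ≤ x ∧ x - 1 ∉ S := by
    by_contra! h
    exact hS (eq_Icc_of_sub_one_mem h0 h)
  obtain ⟨j, hj, rfl⟩ := List.getElem_of_mem (mem_sortedList.2 hx)
  rw [← mem_sortedList] at hgap
  exact ⟨j, hj, by rwa [List.getD_eq_getElem _ _ hj], by rwa [List.getD_eq_getElem _ _ hj]⟩

lemma mandStaticParent_shiftDown {n : ℕ} (hS : S ⊆ Icc 1 n) (h : CanShiftDown (sortedList S) j)
    (hmin : ∀ k < j, ¬CanShiftDown (sortedList S) k) : MandStaticParent n (shiftDown S j) S := by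
  refine ⟨shiftDown_subset_Icc hS h, isStaticOneShift_shiftDown h, fun U hU hUS => ?_⟩
  obtain ⟨k, hk, rfl⟩ := hUS.canShiftDown_and_eq (fun h0 => by simpa using hU h0)
  rcases (not_lt.1 fun hkj => hmin k hkj hk).eq_or_lt with rfl | hjk
  · exact Or.inl rfl
  · right
    rw [sortedList_shiftDown h, sortedList_shiftDown hk]
    obtain ⟨hj, h2, -⟩ := h
    refine List.lex_set_set_of_lt hj hjk ?_
    rw [List.getD_eq_getElem _ _ hj] at h2 ⊢
    omega

end shiftDown

lemma exists_mandStaticParent {n : ℕ} {S : Finset ℕ} (hS : S ⊆ Icc 1 n)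
    (hI : ¬∃ m, S = Icc 1 m) : ∃ T, MandStaticParent n T S := by
  classical
  have hex := exists_canShiftDown (fun h0 => by simpa using hS h0) hI
  exact ⟨_, mandStaticParent_shiftDown hS (Nat.find_spec hex) fun k => Nat.find_min hex⟩

section IsStaticOneShift

variable {S T : Finset ℕ}

lemma IsStaticOneShift.nonempty (h : IsStaticOneShift T S) : T.Nonempty :=
  let ⟨_, hj, _⟩ := h
  ⟨_, mem_sortedList.1 (List.getElem_mem hj)⟩

lemma IsStaticOneShift.sum_add_one (h : IsStaticOneShift T S) :
    ∑ x ∈ T, x + 1 = ∑ x ∈ S, x := by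
  obtain ⟨j, hj, hS⟩ := h
  have := List.sum_set_add_getElem hj ((sortedList T).getD j 0 + 1)
  rw [← hS, List.getD_eq_getElem _ _ hj, sum_sortedList, sum_sortedList] at this
  omega

end IsStaticOneShift

lemma exists_parentRel_sum_lt {n : ℕ} {S : Finset ℕ} (hS : S ⊆ Icc 1 n) (hne : S.Nonempty)
    (h1 : S ≠ {1}) :
    ∃ T, ParentRel n S T ∧ T ⊆ Icc 1 n ∧ T.Nonempty ∧ ∑ x ∈ T, x < ∑ x ∈ S, x := by
  by_cases hI : ∃ m, S = Icc 1 m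
  · obtain ⟨m, rfl⟩ := hI
    have hm : 2 ≤ m := by
      by_contra! hm
      interval_cases m
      · simp at hne
      · simp at h1
    refine ⟨Icc 2 m, Or.inl ⟨m, hm, rfl, rfl⟩, (Icc_subset_Icc_left one_le_two).trans hS,
      nonempty_Icc.2 hm, ?_⟩
    rw [← insert_Icc_add_one_left_eq_Icc (by omega : 1 ≤ m), sum_insert (by simp)]
    norm_num
  · obtain ⟨T, hT⟩ := exists_mandStaticParent hS hI
    have hsum := hT.2.1.sum_add_one
    exact ⟨T, Or.inr ⟨hI, hT⟩, hT.1, hT.2.1.nonempty, by omega⟩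

theorem stmt_10 (n : ℕ) (S : Finset ℕ) (hS : S ⊆ Finset.Icc 1 n)
    (hne : S.Nonempty) (h1 : S ≠ {1}) :
    Relation.TransGen (fun A B => ParentRel n A B) S {1} := by
  induction hk : ∑ x ∈ S, x using Nat.strong_induction_on generalizing S with
  | _ k ih =>
    obtain ⟨T, hST, hT, hTne, hsum⟩ := exists_parentRel_sum_lt hS hne h1
    by_cases hT1 : T = {1}
    · exact .single (hT1 ▸ hST)
    · exact .head hST (ih _ (hk ▸ hsum) T hT hTne hT1 rfl)
end

section
/- A subset T ⊆ {1,...,n} of the form T = {2,...,m+1} (i.e., 1 ∉ T and T is a contiguous block starting at 2) for m ≥ 2 has no mandatory static one shift child; for m = 1 (T = {2}) it has exactly one mandatory static child, namely {3}, provided n ≥ 3. -/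
open Finset

lemma sortedList_eq_iff {S : Finset ℕ} {l : List ℕ} :
    sortedList S = l ↔ l.Pairwise (· < ·) ∧ l.toFinset = S := by
  constructor
  · rintro rfl
    exact ⟨(sortedLT_sort S).pairwise, sort_toFinset _ _⟩
  · rintro ⟨hl, rfl⟩
    exact (List.toFinset_sort _ hl.nodup).mpr (hl.imp le_of_lt)

lemma sortedList_injective : Function.Injective sortedList := fun S U h => by
  rw [← (sortedList_eq_iff.mp h).2, (sortedList_eq_iff.mp rfl).2]

lemma sortedList_Icc (a b : ℕ) : sortedList (Icc a b) = List.range' a (b + 1 - a) := by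
  refine sortedList_eq_iff.mpr ⟨List.pairwise_lt_range', ?_⟩
  ext x
  simp only [List.mem_toFinset, List.mem_range'_1, mem_Icc]
  omega

lemma sortedList_singleton (a : ℕ) : sortedList {a} = [a] := sort_singleton _ a

lemma isStaticOneShift_singleton_left_iff {a : ℕ} {S : Finset ℕ} :
    IsStaticOneShift {a} S ↔ S = {a + 1} := by
  rw [← sortedList_injective.eq_iff, sortedList_singleton (a + 1)]
  simp [IsStaticOneShift, sortedList_singleton]

lemma isStaticOneShift_singleton_right_iff {a : ℕ} {U : Finset ℕ} :
    IsStaticOneShift U {a + 1} ↔ U = {a} := by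
  refine ⟨fun ⟨j, hj, h⟩ => ?_, fun h => h ▸ isStaticOneShift_singleton_left_iff.mpr rfl⟩
  rw [sortedList_singleton] at h
  obtain ⟨b, hb⟩ := List.length_eq_one_iff.mp (by simpa using (congrArg List.length h).symm)
  rw [hb] at h hj
  obtain rfl : j = 0 := by simpa using hj
  obtain rfl : a = b := by simpa using h
  exact sortedList_injective (hb.trans (sortedList_singleton a).symm)

lemma mandStaticParent_singleton_iff {n a : ℕ} (ha : 1 ≤ a) (han : a ≤ n) {S : Finset ℕ} :
    MandStaticParent n {a} S ↔ S = {a + 1} := by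
  refine ⟨fun h => isStaticOneShift_singleton_left_iff.mp h.2.1, ?_⟩
  rintro rfl
  exact ⟨singleton_subset_iff.mpr (mem_Icc.mpr ⟨ha, han⟩),
    isStaticOneShift_singleton_left_iff.mpr rfl,
    fun U _ hU => .inl (isStaticOneShift_singleton_right_iff.mp hU).symm⟩

lemma sortedList_of_isStaticOneShift_Icc {a b : ℕ} {S : Finset ℕ}
    (h : IsStaticOneShift (Icc a b) S) :
    sortedList S = List.range' a (b - a) ++ [b + 1] := by
  obtain ⟨j, hj, hS⟩ := h
  rw [sortedList_Icc, List.length_range'] at hj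
  rw [sortedList_Icc, List.getD_eq_getElem _ _ (by simpa using hj), List.getElem_range'] at hS
  have hsorted := List.pairwise_iff_getElem.mp (sortedList_eq_iff.mp hS).1
  obtain rfl : j = b - a := by
    by_contra hne
    -- shifting the entry `a + j` makes it collide with its successor `a + j + 1`
    have := hsorted j (j + 1) (by simpa using hj) (by simp; omega) (by omega)
    simp only [List.getElem_set_self, List.getElem_set_ne (by omega : j ≠ j + 1),
      List.getElem_range'] at this
    omega
  have hsplit : List.range' a (b + 1 - a) = List.range' a (b - a) ++ [b] := by
    rw [show b + 1 - a = b - a + 1 by omega, List.range'_concat]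
    congr
    omega
  rw [hS, hsplit, List.set_append_right _ _ (by simp), List.length_range', Nat.sub_self,
    List.set_cons_zero]
  congr 3
  omega

lemma sortedList_toFinset_cons_of_sortedList_eq_cons {S : Finset ℕ} {a : ℕ} {l : List ℕ}
    (hS : sortedList S = (a + 1) :: l) : sortedList (a :: l).toFinset = a :: l := by
  obtain ⟨hl_lt, hl⟩ := List.pairwise_cons.mp (sortedList_eq_iff.mp hS).1
  exact sortedList_eq_iff.mpr
    ⟨List.pairwise_cons.mpr ⟨fun x hx => (hl_lt x hx).trans' a.lt_succ_self, hl⟩, rfl⟩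

lemma isStaticOneShift_of_sortedList_eq_cons {S : Finset ℕ} {a : ℕ} {l : List ℕ}
    (hS : sortedList S = (a + 1) :: l) : IsStaticOneShift (a :: l).toFinset S := by
  refine ⟨0, ?_, ?_⟩ <;> rw [sortedList_toFinset_cons_of_sortedList_eq_cons hS] <;> simp [hS]

/-- Lowering the minimum `a + 1` of `S` to `a` gives a parent of `S` that beats `T`. -/
lemma not_mandStaticParent_of_sortedList_eq_cons {n a t : ℕ} {l r : List ℕ}
    {S T : Finset ℕ} (hSn : S ⊆ Icc 1 n) (hS : sortedList S = (a + 1) :: l) (ha : 1 ≤ a)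
    (hT : sortedList T = t :: r) (hat : a < t) : ¬ MandStaticParent n T S := by
  rintro ⟨-, -, hmin⟩
  have hmem : ∀ x ∈ (a + 1) :: l, x ∈ Icc 1 n := fun x hx =>
    hSn (by rwa [← hS, sortedList, mem_sort] at hx)
  have hU : (a :: l).toFinset ⊆ Icc 1 n := by
    intro x hx
    rcases List.mem_cons.mp (List.mem_toFinset.mp hx) with rfl | hx
    · have := mem_Icc.mp (hmem _ List.mem_cons_self)
      exact mem_Icc.mpr ⟨ha, by omega⟩
    · exact hmem x (List.mem_cons_of_mem _ hx)
  rcases hmin _ hU (isStaticOneShift_of_sortedList_eq_cons hS) with rfl | hlex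
  · rw [sortedList_toFinset_cons_of_sortedList_eq_cons hS] at hT
    cases hT
    exact hat.false
  · rw [hT, sortedList_toFinset_cons_of_sortedList_eq_cons hS] at hlex
    cases hlex with
    | cons => exact hat.false
    | rel h => exact (h.trans hat).false

theorem stmt_13_general (n m : ℕ) :
    (2 ≤ m → ¬ ∃ S : Finset ℕ, S ⊆ Finset.Icc 1 n ∧
        MandStaticParent n (Finset.Icc 2 (m + 1)) S) ∧
      (3 ≤ n → ∀ S : Finset ℕ,
        (S ⊆ Finset.Icc 1 n ∧ MandStaticParent n {2} S) ↔ S = {3}) := by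
  refine ⟨fun hm ⟨S, hSn, hS⟩ => ?_, fun hn S => ?_⟩
  · have hT : sortedList (Icc 2 (m + 1)) = 2 :: List.range' 3 (m - 1) := by
      rw [sortedList_Icc, show m + 1 + 1 - 2 = (m - 1) + 1 by omega, List.range'_succ]
    have hS' : sortedList S = (1 + 1) :: (List.range' 3 (m - 2) ++ [m + 2]) := by
      rw [sortedList_of_isStaticOneShift_Icc hS.2.1, show m + 1 - 2 = (m - 2) + 1 by omega,
        List.range'_succ, List.cons_append]
    exact not_mandStaticParent_of_sortedList_eq_cons hSn hS' le_rfl hT one_lt_two hS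
  · rw [mandStaticParent_singleton_iff one_le_two (by omega)]
    refine ⟨And.right, fun hS => ⟨?_, hS⟩⟩
    subst hS
    simpa using hn

theorem stmt_13 (n m : ℕ) (hm : m + 1 ≤ n) :
    (2 ≤ m → ¬ ∃ S : Finset ℕ, S ⊆ Finset.Icc 1 n ∧
        MandStaticParent n (Finset.Icc 2 (m + 1)) S) ∧
      (3 ≤ n → ∀ S : Finset ℕ,
        (S ⊆ Finset.Icc 1 n ∧ MandStaticParent n {2} S) ↔ S = {3}) :=
  stmt_13_general n m
end

section
/- Define the Eppstein child relation on nonempty finite subsets of positive integers bounded by n: the children of S are C1(S) = (S \ {max S}) ∪ {max S + 1} and C2(S) = S ∪ {max S + 1}, defined whenever max S + 1 ≤ n. Then every nonempty subset of {1,...,n} is obtained from the root {1} by a unique finite sequence of child steps; i.e., the relation forms a tree on all nonempty subsets of {1,...,n} rooted at {1}. -/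
/-!
Every `S ≠ {1}` with maximum `M + 1` has exactly one parent, `insert M (S.erase (M + 1))`:
undoing `C1` or `C2` removes the new maximum `M + 1` and restores the old maximum `M`, and
whether `M` already lay in `S` tells which of the two steps was taken. The parent has smaller
element sum, so following parents from any `S` terminates, and it can only stop at `{1}`.
-/

def EppChild (n : ℕ) (S T : Finset ℕ) : Prop :=
  ∃ M : ℕ, M ∈ S ∧ (∀ x ∈ S, x ≤ M) ∧ M + 1 ≤ n ∧
    (T = insert (M + 1) (S.erase M) ∨ T = insert (M + 1) S)

open Finset

lemma EppChild.eq_insert_erase {n : ℕ} {T S : Finset ℕ} (h : EppChild n T S) :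
    ∃ M, IsGreatest (S : Set ℕ) (M + 1) ∧ T = insert M (S.erase (M + 1)) := by
  obtain ⟨M, hMT, hmax, -, hS⟩ := h
  have hM1T : M + 1 ∉ T := fun h => by have := hmax _ h; omega
  refine ⟨M, ⟨?_, fun x hx => ?_⟩, ?_⟩
  · rcases hS with rfl | rfl <;> simp
  · rw [mem_coe] at hx
    rcases hS with rfl | rfl <;> simp only [mem_insert, mem_erase] at hx <;> grind
  · rcases hS with rfl | rfl
    · rw [erase_insert (fun h => hM1T (mem_of_mem_erase h)), insert_erase hMT]
    · rw [erase_insert hM1T, insert_eq_of_mem hMT]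

lemma eppChild_insert_erase {n M : ℕ} {S : Finset ℕ} (hS : IsGreatest (S : Set ℕ) (M + 1))
    (hn : M + 1 ≤ n) : EppChild n (insert M (S.erase (M + 1))) S := by
  have hmem : M + 1 ∈ S := hS.1
  refine ⟨M, mem_insert_self _ _, fun x hx => ?_, hn, ?_⟩
  · rcases mem_insert.1 hx with rfl | hx
    · rfl
    · have := hS.2 (mem_of_mem_erase hx)
      have := ne_of_mem_erase hx
      omega
  · by_cases hM : M ∈ S
    · right
      rw [insert_eq_of_mem (mem_erase.2 ⟨by omega, hM⟩), insert_erase hmem]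
    · left
      rw [erase_insert (fun h => hM (mem_of_mem_erase h)), insert_erase hmem]

lemma eppChild_iff {n M : ℕ} {S T : Finset ℕ} (hS : IsGreatest (S : Set ℕ) (M + 1))
    (hn : M + 1 ≤ n) : EppChild n T S ↔ T = insert M (S.erase (M + 1)) := by
  refine ⟨fun h => ?_, fun h => h ▸ eppChild_insert_erase hS hn⟩
  obtain ⟨M', hM', rfl⟩ := h.eq_insert_erase
  obtain rfl : M' = M := Nat.succ_injective (hM'.unique hS)
  rfl

lemma sum_insert_erase_succ_lt {M : ℕ} {S : Finset ℕ} (h : M + 1 ∈ S) :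
    ∑ x ∈ insert M (S.erase (M + 1)), x < ∑ x ∈ S, x := by
  calc ∑ x ∈ insert M (S.erase (M + 1)), x
      ≤ M + ∑ x ∈ S.erase (M + 1), x := by
        by_cases hM : M ∈ S.erase (M + 1)
        · rw [insert_eq_of_mem hM]; omega
        · rw [sum_insert hM]
    _ < M + 1 + ∑ x ∈ S.erase (M + 1), x := by omega
    _ = ∑ x ∈ S, x := add_sum_erase S id h

lemma exists_isGreatest_succ_of_ne_singleton_one {n : ℕ} {S : Finset ℕ}
    (hS : S ⊆ Icc 1 n) (hne : S.Nonempty) (h1 : S ≠ {1}) :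
    ∃ M, IsGreatest (S : Set ℕ) (M + 1) ∧ 1 ≤ M ∧ M + 1 ≤ n := by
  have hgr := isGreatest_max' S hne
  have hmax := mem_Icc.1 (hS hgr.1)
  have h2 : 2 ≤ S.max' hne := by
    by_contra! hlt
    refine h1 (hne.subset_singleton_iff.1 fun x hx => mem_singleton.2 ?_)
    have := mem_Icc.1 (hS hx)
    have := hgr.2 hx
    omega
  exact ⟨S.max' hne - 1, by rwa [Nat.sub_add_cancel (by omega)], by omega, by omega⟩

lemma exists_eppParent {n : ℕ} {S : Finset ℕ} (hS : S ⊆ Icc 1 n) (hne : S.Nonempty)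
    (h1 : S ≠ {1}) :
    ∃ T ⊆ Icc 1 n, T.Nonempty ∧ ∑ x ∈ T, x < ∑ x ∈ S, x ∧ ∀ T', EppChild n T' S ↔ T' = T := by
  obtain ⟨M, hM, hM1, hMn⟩ := exists_isGreatest_succ_of_ne_singleton_one hS hne h1
  refine ⟨insert M (S.erase (M + 1)), insert_subset (mem_Icc.2 ⟨hM1, by omega⟩)
    ((erase_subset _ _).trans hS), insert_nonempty _ _, sum_insert_erase_succ_lt hM.1,
    fun _ => eppChild_iff hM hMn⟩

theorem stmt_14 (n : ℕ) :
    (∀ S : Finset ℕ, S ⊆ Finset.Icc 1 n → S.Nonempty →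
      Relation.ReflTransGen (EppChild n) {1} S) ∧
    (∀ S : Finset ℕ, S ⊆ Finset.Icc 1 n → S.Nonempty → S ≠ {1} →
      ∃! T : Finset ℕ, T ⊆ Finset.Icc 1 n ∧ EppChild n T S) := by
  refine ⟨fun S => ?_, fun S hS hne h1 => ?_⟩
  · induction hsum : ∑ x ∈ S, x using Nat.strong_induction_on generalizing S with
    | _ k ih =>
      intro hS hne
      by_cases h1 : S = {1}
      · rw [h1]
      obtain ⟨T, hT, hTne, hlt, hpar⟩ := exists_eppParent hS hne h1
      exact (ih _ (hsum ▸ hlt) T rfl hT hTne).tail ((hpar T).2 rfl)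
  · obtain ⟨T, hT, -, -, hpar⟩ := exists_eppParent hS hne h1
    exact ⟨T, ⟨hT, (hpar T).2 rfl⟩, fun T' hT' => (hpar T').1 hT'.2⟩
end

section
/- Let R : {1,...,n} → ℝ be monotone nondecreasing and nonnegative, and consider the final DAG parent function (parent of {1,...,m}, m ≥ 2, is {2,...,m}; parent of any other S ≠ {1} is its mandatory static parent). If there is a directed path from node T to node S (i.e., T is an iterated parent of S), then ∑_{i ∈ T} R(i) ≤ ∑_{i ∈ S} R(i). -/
/-!
A static one shift raises one element of a set by one, and the remaining parent step
removes the element `1`. For a nonnegative nondecreasing weight `R` neither move can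
decrease `∑ R`, so the total weight can only grow along every edge towards the child.
-/

theorem sum_map_sortedList {M : Type*} [AddCommMonoid M] (R : ℕ → M) (S : Finset ℕ) :
    ((sortedList S).map R).sum = ∑ i ∈ S, R i := by
  rw [sortedList, ((Finset.sort_perm_toList S _).map R).sum_eq]
  exact Finset.sum_map_toList S R

section

variable {M : Type*} [AddCommMonoid M] [PartialOrder M] [IsOrderedAddMonoid M]

theorem List.sum_map_le_sum_map_set_getD_succ {R : ℕ → M} (hR : Monotone R) :
    ∀ (l : List ℕ) (j : ℕ), j < l.length →
      (l.map R).sum ≤ ((l.set j (l.getD j 0 + 1)).map R).sum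
  | a :: _, 0, _ => add_le_add_left (hR a.le_succ) _
  | _ :: t, j + 1, hj =>
    add_le_add_right (sum_map_le_sum_map_set_getD_succ hR t j (Nat.lt_of_succ_lt_succ hj)) _

theorem IsStaticOneShift.sum_le {R : ℕ → M} (hR : Monotone R) {T S : Finset ℕ}
    (h : IsStaticOneShift T S) : ∑ i ∈ T, R i ≤ ∑ i ∈ S, R i := by
  obtain ⟨j, hj, hS⟩ := h
  rw [← sum_map_sortedList, ← sum_map_sortedList, hS]
  exact List.sum_map_le_sum_map_set_getD_succ hR _ j hj

theorem ParentRel.sum_le {n : ℕ} {R : ℕ → M} (hR : Monotone R) (hpos : ∀ i, 0 ≤ R i)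
    {S T : Finset ℕ} (h : ParentRel n S T) : ∑ i ∈ T, R i ≤ ∑ i ∈ S, R i := by
  rcases h with ⟨m, -, rfl, rfl⟩ | ⟨-, -, hshift, -⟩
  · exact Finset.sum_le_sum_of_subset_of_nonneg
      (Finset.Icc_subset_Icc (by norm_num) le_rfl) fun i _ _ => hpos i
  · exact hshift.sum_le hR

end

theorem stmt_16 (n : ℕ) (R : ℕ → ℝ) (hR : Monotone R) (hpos : ∀ i, 0 ≤ R i)
    (S T : Finset ℕ)
    (h : Relation.TransGen (fun A B => ParentRel n A B) S T) :
    (∑ i ∈ T, R i) ≤ ∑ i ∈ S, R i := by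
  induction h with
  | single hST => exact hST.sum_le hR hpos
  | tail _ hUT ih => exact (hUT.sum_le hR hpos).trans ih
end
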